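/- arXiv:2505.13377 — 2 statements merged into one kernel-verified Lean document; each statement's English description precedes it below -/
import Mathlib

section
/- With Ψ(g) = Δg − E_t[g/(a_t(a_t + g))], a_t = σ_t², c_t = σ_t² + σ², and Δ = E_t[1/(c_t + ‖Ae‖²)²], the derivative Ψ'(g) = Δ − E_t[1/(a_t + g)²] satisfies Ψ'(g*) = 0 at g* = σ² + ‖Ae‖², Ψ'(0) < 0, and Ψ'(g) > 0 for g > σ² + ‖Ae‖². Hence g* is the unique minimizer of Ψ on [0, ∞). -/
open Matrix MeasureTheory

/-!
By partial fractions, `g / (a (a + g)) = 1 / a - 1 / (a + g)`, so `Ψ` is differentiable under the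
integral with `Ψ' = P`. Since `1 / (a_t + g)²` decreases in `g`, `P` is strictly increasing, and
`P g* = 0` because `c_t + ‖Ae‖² = a_t + g*`. Hence `Ψ` decreases strictly on `[0, g*]` and
increases strictly on `[g*, ∞)`.
-/

open Set Filter Topology intervalIntegral

section IntegralOfInverse

variable {f : ℝ → ℝ} {a b c : ℝ}

theorem intervalIntegrable_one_div_pow_of_le (hf : Measurable f) (hc : 0 < c)
    (hle : ∀ t ∈ uIcc a b, c ≤ f t) (n : ℕ) :
    IntervalIntegrable (fun t => 1 / f t ^ n) volume a b := by
  refine (intervalIntegrable_const (c := 1 / c ^ n)).mono_fun'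
    (by fun_prop : Measurable fun t => 1 / f t ^ n).aestronglyMeasurable ?_
  filter_upwards [ae_restrict_mem measurableSet_uIoc] with t ht
  have hct := hle t (uIoc_subset_uIcc ht)
  rw [Real.norm_of_nonneg (by have := hc.trans_le hct; positivity)]
  gcongr

theorem hasDerivAt_integral_one_div_add (hf : Measurable f)
    (hle : ∀ t ∈ uIcc a b, c ≤ f t) {x : ℝ} (hx : 0 < c + x) :
    HasDerivAt (fun y => ∫ t in a..b, 1 / (f t + y))
      (-∫ t in a..b, 1 / (f t + x) ^ 2) x := by
  have hr : 0 < (c + x) / 2 := by positivity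
  -- on the ball of radius `(c + x) / 2` around `x`, `f t + y` stays above `(c + x) / 2`
  have hball :
      ∀ t ∈ uIcc a b, ∀ y ∈ Metric.ball x ((c + x) / 2), (c + x) / 2 ≤ f t + y := by
    intro t ht y hy
    rw [Real.ball_eq_Ioo] at hy
    linarith [hle t ht, hy.1]
  rw [← intervalIntegral.integral_neg]
  refine (hasDerivAt_integral_of_dominated_loc_of_deriv_le
    (F' := fun y t => -(1 / (f t + y) ^ 2)) (bound := fun _ => 1 / ((c + x) / 2) ^ 2)
    (Metric.ball_mem_nhds x hr)
    (Eventually.of_forall fun y =>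
      (by fun_prop : Measurable fun t => 1 / (f t + y)).aestronglyMeasurable)
    ?_ ?_ ?_ (intervalIntegrable_const (μ := volume)) ?_).2
  · simpa only [pow_one] using intervalIntegrable_one_div_pow_of_le (hf.add_const x) hx
      (fun t ht => by linarith [hle t ht]) 1
  · exact (by fun_prop : Measurable fun t => -(1 / (f t + x) ^ 2)).aestronglyMeasurable
  · filter_upwards with t ht y hy
    have hty := hball t (uIoc_subset_uIcc ht) y hy
    rw [norm_neg, Real.norm_of_nonneg (by have := hr.trans_le hty; positivity)]
    gcongr
  · filter_upwards with t ht y hy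
    have hty := hr.trans_le (hball t (uIoc_subset_uIcc ht) y hy)
    simpa [one_div, neg_div] using ((hasDerivAt_id y).const_add (f t)).fun_inv hty.ne'

theorem hasDerivAt_integral_div_mul_add (hf : Measurable f) (hc : 0 < c)
    (hle : ∀ t ∈ uIcc a b, c ≤ f t) {x : ℝ} (hx : 0 < c + x) :
    HasDerivAt (fun y => ∫ t in a..b, y / (f t * (f t + y)))
      (∫ t in a..b, 1 / (f t + x) ^ 2) x := by
  have hint : ∀ y, 0 < c + y → IntervalIntegrable (fun t => 1 / (f t + y)) volume a b := by
    intro y hy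
    simpa only [pow_one] using intervalIntegrable_one_div_pow_of_le
      (hf.add_const y) hy (fun t ht => by linarith [hle t ht]) 1
  have hsplit : (fun y => ∫ t in a..b, y / (f t * (f t + y))) =ᶠ[𝓝 x]
      fun y => (∫ t in a..b, 1 / (f t + 0)) - ∫ t in a..b, 1 / (f t + y) := by
    filter_upwards [(isOpen_Ioi.mem_nhds (show x ∈ Ioi (-c) by simp; linarith))] with y hy
    rw [← integral_sub (hint 0 (by linarith)) (hint y (by simp at hy; linarith))]
    refine integral_congr fun t ht => ?_
    have h1 : 0 < f t := hc.trans_le (hle t ht)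
    have h2 : 0 < f t + y := by simp at hy; linarith [hle t ht]
    field_simp
    ring
  simpa using ((hasDerivAt_const x _).sub
    (hasDerivAt_integral_one_div_add hf hle hx)).congr_of_eventuallyEq hsplit

theorem strictAntiOn_integral_one_div_add_sq (hf : Measurable f) (hab : a < b)
    (hle : ∀ t ∈ uIcc a b, c ≤ f t) :
    StrictAntiOn (fun y => ∫ t in a..b, 1 / (f t + y) ^ 2) (Ioi (-c)) := by
  intro y hy z hz hyz
  simp only [mem_Ioi] at hy hz ⊢
  have hint : ∀ y, -c < y → IntervalIntegrable (fun t => 1 / (f t + y) ^ 2) volume a b :=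
    fun y hy => intervalIntegrable_one_div_pow_of_le (c := c + y) (hf.add_const y) (by linarith)
      (fun t ht => by linarith [hle t ht]) 2
  rw [← sub_pos, ← integral_sub (hint y hy) (hint z hz)]
  refine intervalIntegral_pos_of_pos_on ((hint y hy).sub (hint z hz)) (fun t ht => ?_) hab
  have hty : 0 < f t + y := by
    linarith [hle t (by rw [uIcc_of_le hab.le]; exact Ioo_subset_Icc_self ht)]
  have : 1 / (f t + z) ^ 2 < 1 / (f t + y) ^ 2 := by gcongr
  linarith

end IntegralOfInverse

theorem lt_of_hasDerivAt_of_strictMonoOn {f f' : ℝ → ℝ} {a x₀ : ℝ}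
    (hf : ∀ x ∈ Ici a, HasDerivAt f (f' x) x) (hf' : StrictMonoOn f' (Ici a))
    (hx₀ : x₀ ∈ Ici a) (hcrit : f' x₀ = 0) {x : ℝ} (hx : x ∈ Ici a) (hne : x ≠ x₀) :
    f x₀ < f x := by
  have hcont : ∀ s ⊆ Ici a, ContinuousOn f s := fun s hs y hy =>
    (hf y (hs hy)).continuousAt.continuousWithinAt
  rcases hne.lt_or_gt with hlt | hgt
  · refine strictAntiOn_of_deriv_neg (convex_Icc x x₀)
      (hcont _ (Icc_subset_Ici_self.trans (Ici_subset_Ici.2 hx))) (fun y hy => ?_)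
      ⟨le_rfl, hlt.le⟩ ⟨hlt.le, le_rfl⟩ hlt
    rw [interior_Icc] at hy
    have hya : y ∈ Ici a := mem_Ici.2 (le_trans hx hy.1.le)
    rw [(hf y hya).deriv, ← hcrit]
    exact hf' hya hx₀ hy.2
  · refine strictMonoOn_of_deriv_pos (convex_Ici x₀) (hcont _ (Ici_subset_Ici.2 hx₀))
      (fun y hy => ?_) self_mem_Ici hgt.le hgt
    rw [interior_Ici] at hy
    have hya : y ∈ Ici a := mem_Ici.2 (le_trans hx₀ hy.le)
    rw [(hf y hya).deriv, ← hcrit]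
    exact hf' hx₀ hya hy

theorem stmt_4_general {m d : ℕ} (A : Matrix (Fin m) (Fin d) ℝ) (e : Fin d → ℝ)
    (σ σmin σmax : ℝ) (hσ : 0 < σ) (hσmin : 0 < σmin)
    (σt : ℝ → ℝ) (hmeas : Measurable σt)
    (hbound : ∀ t ∈ Set.Icc (0 : ℝ) 1, σmin ≤ σt t ∧ σt t ≤ σmax)
    (Δ : ℝ)
    (hΔ : Δ = ∫ t in (0 : ℝ)..1,
        1 / (σt t ^ 2 + σ ^ 2 + (A.mulVec e) ⬝ᵥ (A.mulVec e)) ^ 2)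
    (Ψ P : ℝ → ℝ)
    (hΨ : Ψ = fun g => Δ * g - ∫ t in (0 : ℝ)..1, g / (σt t ^ 2 * (σt t ^ 2 + g)))
    (hP : P = fun g => Δ - ∫ t in (0 : ℝ)..1, 1 / (σt t ^ 2 + g) ^ 2)
    (gstar : ℝ) (hgstar : gstar = σ ^ 2 + (A.mulVec e) ⬝ᵥ (A.mulVec e)) :
    (∀ g : ℝ, 0 ≤ g → HasDerivAt Ψ (P g) g) ∧
      P gstar = 0 ∧ P 0 < 0 ∧ (∀ g : ℝ, gstar < g → 0 < P g) ∧
      ∀ g ∈ Set.Ici (0 : ℝ), g ≠ gstar → Ψ gstar < Ψ g := by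
  have hle : ∀ t ∈ uIcc (0 : ℝ) 1, σmin ^ 2 ≤ σt t ^ 2 := fun t ht => by
    rw [uIcc_of_le zero_le_one] at ht
    gcongr
    exact (hbound t ht).1
  have hmeas2 : Measurable fun t => σt t ^ 2 := by fun_prop
  have hgstar_pos : 0 < gstar := by
    have : 0 ≤ A *ᵥ e ⬝ᵥ A *ᵥ e := by simpa using dotProduct_self_star_nonneg (A *ᵥ e)
    rw [hgstar]; positivity
  have hderiv : ∀ g ∈ Ici (0 : ℝ), HasDerivAt Ψ (P g) g := fun g hg => by
    rw [hΨ, hP]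
    exact ((hasDerivAt_id g).const_mul Δ).sub
      (hasDerivAt_integral_div_mul_add hmeas2 (by positivity) hle (by simp at hg; positivity))
      |>.congr_deriv (by simp)
  have hmono : StrictMonoOn P (Ici 0) := by
    have hsub : Ici (0 : ℝ) ⊆ Ioi (-σmin ^ 2) :=
      Ici_subset_Ioi.2 (neg_neg_of_pos (by positivity))
    rw [hP]
    exact fun y hy z hz hyz => sub_lt_sub_left
      (strictAntiOn_integral_one_div_add_sq hmeas2 zero_lt_one hle (hsub hy) (hsub hz) hyz) Δ
  have hcrit : P gstar = 0 := by
    rw [hP, hΔ, hgstar, sub_eq_zero]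
    simp only [add_assoc]
  refine ⟨hderiv, hcrit, ?_, fun g hg => ?_, fun g hg hne =>
    lt_of_hasDerivAt_of_strictMonoOn hderiv hmono hgstar_pos.le hcrit hg hne⟩
  · simpa [hcrit] using hmono self_mem_Ici hgstar_pos.le hgstar_pos
  · simpa [hcrit] using hmono hgstar_pos.le (hgstar_pos.trans hg).le hg

/-- With `Ψ(g) = Δg − E_t[g/(a_t(a_t + g))]`, `a_t = σ_t²`, `c_t = σ_t² + σ²`, and
`Δ = E_t[1/(c_t + ‖Ae‖²)²]`, the derivative `Ψ'(g) = Δ − E_t[1/(a_t + g)²]` satisfies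
`Ψ'(g*) = 0` at `g* = σ² + ‖Ae‖²`, `Ψ'(0) < 0`, and `Ψ'(g) > 0` for `g > g*`; hence `g*`
is the unique minimizer of `Ψ` on `[0, ∞)`. -/
theorem stmt_4 {m d : ℕ} (A : Matrix (Fin m) (Fin d) ℝ) (e : Fin d → ℝ)
    (hAe : A.mulVec e ≠ 0)
    (σ σmin σmax : ℝ) (hσ : 0 < σ) (hσmin : 0 < σmin)
    (σt : ℝ → ℝ) (hmeas : Measurable σt)
    (hbound : ∀ t ∈ Set.Icc (0 : ℝ) 1, σmin ≤ σt t ∧ σt t ≤ σmax)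
    (Δ : ℝ)
    (hΔ : Δ = ∫ t in (0 : ℝ)..1,
        1 / (σt t ^ 2 + σ ^ 2 + (A.mulVec e) ⬝ᵥ (A.mulVec e)) ^ 2)
    (Ψ P : ℝ → ℝ)
    (hΨ : Ψ = fun g => Δ * g - ∫ t in (0 : ℝ)..1, g / (σt t ^ 2 * (σt t ^ 2 + g)))
    (hP : P = fun g => Δ - ∫ t in (0 : ℝ)..1, 1 / (σt t ^ 2 + g) ^ 2)
    (gstar : ℝ) (hgstar : gstar = σ ^ 2 + (A.mulVec e) ⬝ᵥ (A.mulVec e)) :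
    (∀ g : ℝ, 0 ≤ g → HasDerivAt Ψ (P g) g) ∧
      P gstar = 0 ∧ P 0 < 0 ∧ (∀ g : ℝ, gstar < g → 0 < P g) ∧
      ∀ g ∈ Set.Ici (0 : ℝ), g ≠ gstar → Ψ gstar < Ψ g :=
  stmt_4_general A e σ σmin σmax hσ hσmin σt hmeas hbound Δ hΔ Ψ P hΨ hP gstar hgstar
end

section
/- With g* = σ² + ‖Ae‖² and u* = ±√(g*/‖Ae‖²) e, one has g(u*) = uᵀ*AᵀAu* = g* and h(u*)² = (eᵀAᵀAu*)² = g*‖Ae‖², hence L(u*) = Δ g* − E_t[φ_t(g*)] where Δ = c̃ − η̃‖Ae‖² and L, g, h, φ_t, c̃, η̃ are as in the reduced score-distillation loss. Consequently u* attains the global minimum of L. -/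
open Matrix MeasureTheory

/-!
Write `k = ‖Ae‖²` and `a_t = σ_t²`. Cauchy–Schwarz gives `h(u)² ≤ k g(u)`, with equality along `e`,
and `η̃ ≥ 0`, so `L(u) ≥ Ψ(g(u))` with `Ψ(x) = Δ x − E_t[φ_t(x)]`, and `L = Ψ ∘ g` on the line `ℝ e`.
With `c = a_t + σ²`, the partial fractions `(2c + k) k / (c²(c + k)²) = 1/c² − 1/(c + k)²`
turn `Δ` into `E_t[1/(a_t + g*)²]`, which is the slope at `g*` of the concave map `x ↦ E_t[φ_t(x)]`
(`φ_t(x) = 1/a_t − 1/(a_t + x)`). Hence `g*` minimises `Ψ` on `[0, ∞)`, and `g(u*) = g*`.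
-/

section DotProduct

variable {m n R : Type*} [Fintype m] [Fintype n]

lemma dotProduct_transpose_mul_mulVec [CommSemiring R]
    (A : Matrix m n R) (v w : n → R) : v ⬝ᵥ (Aᵀ * A) *ᵥ w = A *ᵥ v ⬝ᵥ A *ᵥ w := by
  rw [← mulVec_mulVec, dotProduct_mulVec, vecMul_transpose]

lemma sq_dotProduct_le [CommRing R] [LinearOrder R] [IsStrictOrderedRing R] (v w : n → R) :
    (v ⬝ᵥ w) ^ 2 ≤ (v ⬝ᵥ v) * (w ⬝ᵥ w) := by
  simpa only [dotProduct, sq] using Finset.sum_mul_sq_le_sq_mul_sq Finset.univ v w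

lemma dotProduct_transpose_mul_mulVec_smul_of_sq_eq [Field R]
    {A : Matrix m n R} {v : n → R} {c x : R} (hAv : A *ᵥ v ⬝ᵥ A *ᵥ v ≠ 0)
    (hc : c ^ 2 = x / (A *ᵥ v ⬝ᵥ A *ᵥ v)) :
    (c • v) ⬝ᵥ (Aᵀ * A) *ᵥ (c • v) = x ∧
      (v ⬝ᵥ (Aᵀ * A) *ᵥ (c • v)) ^ 2 = x * (A *ᵥ v ⬝ᵥ A *ᵥ v) := by
  simp only [dotProduct_transpose_mul_mulVec, mulVec_smul, smul_dotProduct, dotProduct_smul,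
    smul_eq_mul]
  constructor
  · rw [← mul_assoc, ← sq, hc, div_mul_cancel₀ _ hAv]
  · rw [mul_pow, hc]
    field_simp

end DotProduct

lemma div_mul_add_le_tangent {a x y : ℝ} (ha : 0 < a) (hx : 0 ≤ x) (hy : 0 ≤ y) :
    x / (a * (a + x)) ≤ y / (a * (a + y)) + (x - y) / (a + y) ^ 2 := by
  have hgap : y / (a * (a + y)) + (x - y) / (a + y) ^ 2 - x / (a * (a + x)) =
      (x - y) ^ 2 / ((a + y) ^ 2 * (a + x)) := by
    field_simp
    ring
  have : 0 ≤ (x - y) ^ 2 / ((a + y) ^ 2 * (a + x)) := by positivity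
  linarith

lemma two_mul_add_div_sq_mul_sq_mul {c k : ℝ} (hc : c ≠ 0) (hck : c + k ≠ 0) :
    (2 * c + k) / (c ^ 2 * (c + k) ^ 2) * k = (c ^ 2)⁻¹ - ((c + k) ^ 2)⁻¹ := by
  field_simp
  ring

lemma intervalIntegrable_of_abs_le {f : ℝ → ℝ} {a b C : ℝ} (hf : Measurable f) (hab : a ≤ b)
    (hC : ∀ t ∈ Set.Icc a b, |f t| ≤ C) : IntervalIntegrable f volume a b := by
  rw [intervalIntegrable_iff_integrableOn_Ioc_of_le hab]
  refine Measure.integrableOn_of_bounded measure_Ioc_lt_top.ne hf.aestronglyMeasurable (M := C)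
    ((ae_restrict_iff' measurableSet_Ioc).2 (.of_forall fun t ht => ?_))
  simpa using hC t (Set.Ioc_subset_Icc_self ht)

section BoundedBelow

variable {a : ℝ → ℝ} {ε : ℝ} (ha : Measurable a) (hε : 0 < ε)
  (haε : ∀ t ∈ Set.Icc (0 : ℝ) 1, ε ≤ a t)
include ha hε haε

lemma intervalIntegrable_inv_sq_add {y : ℝ} (hy : 0 ≤ y) :
    IntervalIntegrable (fun t => ((a t + y) ^ 2)⁻¹) volume 0 1 := by
  refine intervalIntegrable_of_abs_le (by fun_prop) zero_le_one (C := (ε ^ 2)⁻¹) fun t ht => ?_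
  have haεt := haε t ht
  rw [abs_of_nonneg (by positivity)]
  gcongr
  linarith

lemma intervalIntegrable_div_mul_add {x : ℝ} (hx : 0 ≤ x) :
    IntervalIntegrable (fun t => x / (a t * (a t + x))) volume 0 1 := by
  refine intervalIntegrable_of_abs_le (by fun_prop) zero_le_one (C := x / (ε * ε))
    fun t ht => ?_
  have haεt := haε t ht
  have : 0 < a t := hε.trans_le haεt
  rw [abs_of_nonneg (by positivity)]
  gcongr
  linarith

lemma integral_two_mul_add_div_sq_mul_sq_mul {b k : ℝ} (hb : 0 ≤ b) (hk : 0 ≤ k) :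
    (∫ t in (0 : ℝ)..1, (2 * (a t + b) + k) / ((a t + b) ^ 2 * (a t + b + k) ^ 2)) * k =
      (∫ t in (0 : ℝ)..1, ((a t + b) ^ 2)⁻¹) - ∫ t in (0 : ℝ)..1, ((a t + b + k) ^ 2)⁻¹ := by
  have hbk : IntervalIntegrable (fun t => ((a t + b + k) ^ 2)⁻¹) volume 0 1 := by
    simpa only [add_assoc] using intervalIntegrable_inv_sq_add ha hε haε (add_nonneg hb hk)
  rw [← intervalIntegral.integral_mul_const,
    ← intervalIntegral.integral_sub (intervalIntegrable_inv_sq_add ha hε haε hb) hbk]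
  refine intervalIntegral.integral_congr fun t ht => two_mul_add_div_sq_mul_sq_mul ?_ ?_
  all_goals
    have : 0 < a t := hε.trans_le (haε t (by simpa [Set.uIcc_of_le zero_le_one] using ht))
    positivity

lemma integral_div_mul_add_le {x y : ℝ} (hx : 0 ≤ x) (hy : 0 ≤ y) :
    ∫ t in (0 : ℝ)..1, x / (a t * (a t + x)) ≤
      (∫ t in (0 : ℝ)..1, y / (a t * (a t + y))) +
        (x - y) * ∫ t in (0 : ℝ)..1, ((a t + y) ^ 2)⁻¹ := by
  rw [← intervalIntegral.integral_const_mul,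
    ← intervalIntegral.integral_add (intervalIntegrable_div_mul_add ha hε haε hy)
      ((intervalIntegrable_inv_sq_add ha hε haε hy).const_mul _)]
  refine intervalIntegral.integral_mono_on zero_le_one
    (intervalIntegrable_div_mul_add ha hε haε hx)
    ((intervalIntegrable_div_mul_add ha hε haε hy).add
      ((intervalIntegrable_inv_sq_add ha hε haε hy).const_mul _)) fun t ht => ?_
  simpa only [div_eq_mul_inv, one_mul] using
    div_mul_add_le_tangent (hε.trans_le (haε t ht)) hx hy

end BoundedBelow

theorem stmt_14_general {m d : ℕ} (A : Matrix (Fin m) (Fin d) ℝ) (e : Fin d → ℝ)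
    (hAe : A.mulVec e ≠ 0)
    (σ σmin σmax : ℝ) (hσmin : 0 < σmin)
    (σt : ℝ → ℝ) (hmeas : Measurable σt)
    (hbound : ∀ t ∈ Set.Icc (0 : ℝ) 1, σmin ≤ σt t ∧ σt t ≤ σmax)
    (g h : (Fin d → ℝ) → ℝ) (φ : ℝ → ℝ → ℝ) (ctil ηtil Δ : ℝ) (L : (Fin d → ℝ) → ℝ)
    (hg : g = fun u => u ⬝ᵥ (Aᵀ * A).mulVec u)
    (hh : h = fun u => e ⬝ᵥ (Aᵀ * A).mulVec u)
    (hφ : φ = fun t x => x / (σt t ^ 2 * (σt t ^ 2 + x)))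
    (hctil : ctil = ∫ t in (0 : ℝ)..1, ((σt t ^ 2 + σ ^ 2) ^ 2)⁻¹)
    (hηtil : ηtil = ∫ t in (0 : ℝ)..1,
        (2 * (σt t ^ 2 + σ ^ 2) + (A.mulVec e) ⬝ᵥ (A.mulVec e)) /
          ((σt t ^ 2 + σ ^ 2) ^ 2 *
            (σt t ^ 2 + σ ^ 2 + (A.mulVec e) ⬝ᵥ (A.mulVec e)) ^ 2))
    (hΔ : Δ = ctil - ηtil * ((A.mulVec e) ⬝ᵥ (A.mulVec e)))
    (hL : L = fun u => ctil * g u - ηtil * (h u) ^ 2 - ∫ t in (0 : ℝ)..1, φ t (g u))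
    (gstar : ℝ) (hgstar : gstar = σ ^ 2 + (A.mulVec e) ⬝ᵥ (A.mulVec e))
    (ustar : Fin d → ℝ)
    (hustar : ustar = Real.sqrt (gstar / ((A.mulVec e) ⬝ᵥ (A.mulVec e))) • e ∨
              ustar = -(Real.sqrt (gstar / ((A.mulVec e) ⬝ᵥ (A.mulVec e))) • e)) :
    g ustar = gstar ∧
      (h ustar) ^ 2 = gstar * ((A.mulVec e) ⬝ᵥ (A.mulVec e)) ∧
      L ustar = Δ * gstar - (∫ t in (0 : ℝ)..1, φ t gstar) ∧
      ∀ u : Fin d → ℝ, L ustar ≤ L u := by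
  set k := A *ᵥ e ⬝ᵥ A *ᵥ e
  have hk : 0 < k := by simpa using dotProduct_self_star_pos_iff.2 hAe
  have hgs : 0 < gstar := by rw [hgstar]; positivity
  have hσt : ∀ t ∈ Set.Icc (0 : ℝ) 1, σmin ^ 2 ≤ σt t ^ 2 := fun t ht =>
    pow_le_pow_left₀ hσmin.le (hbound t ht).1 2
  have hsq : Measurable fun t => σt t ^ 2 := by fun_prop
  obtain ⟨c, rfl, hc⟩ : ∃ c : ℝ, ustar = c • e ∧ c ^ 2 = gstar / k := by
    rcases hustar with rfl | rfl
    exacts [⟨_, rfl, Real.sq_sqrt (by positivity)⟩,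
      ⟨_, (neg_smul _ _).symm, by rw [neg_sq, Real.sq_sqrt (by positivity)]⟩]
  obtain ⟨hg_star, hh_star⟩ : g (c • e) = gstar ∧ h (c • e) ^ 2 = gstar * k :=
    hg ▸ hh ▸ dotProduct_transpose_mul_mulVec_smul_of_sq_eq hk.ne' hc
  have hΔ_int : Δ = ∫ t in (0 : ℝ)..1, ((σt t ^ 2 + gstar) ^ 2)⁻¹ := by
    rw [hΔ, hctil, hηtil, integral_two_mul_add_div_sq_mul_sq_mul hsq (by positivity) hσt
      (sq_nonneg σ) hk.le, hgstar]
    simp only [add_assoc, sub_sub_cancel]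
  have hLstar : L (c • e) = Δ * gstar - ∫ t in (0 : ℝ)..1, φ t gstar := by
    simp only [hL, hg_star, hh_star, hΔ]
    ring
  refine ⟨hg_star, hh_star, hLstar, fun u => ?_⟩
  have hη : 0 ≤ ηtil := hηtil ▸ intervalIntegral.integral_nonneg zero_le_one fun t _ => by
    positivity
  have hCS : ηtil * h u ^ 2 ≤ ηtil * (k * g u) := by
    simpa only [hg, hh, dotProduct_transpose_mul_mulVec] using
      mul_le_mul_of_nonneg_left (sq_dotProduct_le (A *ᵥ e) (A *ᵥ u)) hη
  have hg_nonneg : 0 ≤ g u := by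
    simpa only [hg, dotProduct_transpose_mul_mulVec, star_trivial] using
      dotProduct_star_self_nonneg (A *ᵥ u)
  have hφ_tangent := integral_div_mul_add_le hsq (by positivity) hσt hg_nonneg hgs.le
  rw [hLstar, hL, hφ, hΔ_int]
  linear_combination hφ_tangent + hCS + g u * hΔ - g u * hΔ_int

/-- With `g* = σ² + ‖Ae‖²` and `u* = ±√(g*/‖Ae‖²) e`, one has `g(u*) = g*` and
`h(u*)² = g*‖Ae‖²`, hence `L(u*) = Δ g* − E_t[φ_t(g*)]` with `Δ = c̃ − η̃‖Ae‖²`;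
consequently `u*` attains the global minimum of `L`. -/
theorem stmt_14 {m d : ℕ} (A : Matrix (Fin m) (Fin d) ℝ) (e : Fin d → ℝ)
    (he : e ⬝ᵥ e = 1) (hAe : A.mulVec e ≠ 0)
    (σ σmin σmax : ℝ) (hσ : 0 < σ) (hσmin : 0 < σmin)
    (σt : ℝ → ℝ) (hmeas : Measurable σt)
    (hbound : ∀ t ∈ Set.Icc (0 : ℝ) 1, σmin ≤ σt t ∧ σt t ≤ σmax)
    (g h : (Fin d → ℝ) → ℝ) (φ : ℝ → ℝ → ℝ) (ctil ηtil Δ : ℝ) (L : (Fin d → ℝ) → ℝ)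
    (hg : g = fun u => u ⬝ᵥ (Aᵀ * A).mulVec u)
    (hh : h = fun u => e ⬝ᵥ (Aᵀ * A).mulVec u)
    (hφ : φ = fun t x => x / (σt t ^ 2 * (σt t ^ 2 + x)))
    (hctil : ctil = ∫ t in (0 : ℝ)..1, ((σt t ^ 2 + σ ^ 2) ^ 2)⁻¹)
    (hηtil : ηtil = ∫ t in (0 : ℝ)..1,
        (2 * (σt t ^ 2 + σ ^ 2) + (A.mulVec e) ⬝ᵥ (A.mulVec e)) /
          ((σt t ^ 2 + σ ^ 2) ^ 2 *
            (σt t ^ 2 + σ ^ 2 + (A.mulVec e) ⬝ᵥ (A.mulVec e)) ^ 2))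
    (hΔ : Δ = ctil - ηtil * ((A.mulVec e) ⬝ᵥ (A.mulVec e)))
    (hL : L = fun u => ctil * g u - ηtil * (h u) ^ 2 - ∫ t in (0 : ℝ)..1, φ t (g u))
    (gstar : ℝ) (hgstar : gstar = σ ^ 2 + (A.mulVec e) ⬝ᵥ (A.mulVec e))
    (ustar : Fin d → ℝ)
    (hustar : ustar = Real.sqrt (gstar / ((A.mulVec e) ⬝ᵥ (A.mulVec e))) • e ∨
              ustar = -(Real.sqrt (gstar / ((A.mulVec e) ⬝ᵥ (A.mulVec e))) • e)) :
    g ustar = gstar ∧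
      (h ustar) ^ 2 = gstar * ((A.mulVec e) ⬝ᵥ (A.mulVec e)) ∧
      L ustar = Δ * gstar - (∫ t in (0 : ℝ)..1, φ t gstar) ∧
      ∀ u : Fin d → ℝ, L ustar ≤ L u :=
  stmt_14_general A e hAe σ σmin σmax hσmin σt hmeas hbound g h φ ctil ηtil Δ L hg hh hφ hctil hηtil
    hΔ hL gstar hgstar ustar hustar
end
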